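/- arXiv:1109.4070 — 4 statements merged into one kernel-verified Lean document; each statement's English description precedes it below -/
import Mathlib

section
/- Let p be a prime, n a positive integer, and k a positive integer. Let W be a module over R = 𝔽_p[G]. Suppose W contains an R-submodule V isomorphic to the free module R^k, and suppose there exists δ ∈ W with (σ-1)^{p^n-1}·δ = 0 and δ ∉ V. Then the set of R-submodules of W that are isomorphic to R^k has cardinality at least p^k. (Proposition 4.2.) -/
/-!
Write `t = σ - 1`. The algebra `R = 𝔽_p[G]` is generated by `t`, which satisfies `t ^ pⁿ = 0`,
and `dim R = pⁿ`; hence `R = 𝔽_p + tR` and `t ^ (pⁿ - 1) ≠ 0`, so the annihilator of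
`t ^ (pⁿ - 1)` in `R` is `tR`. Multiplying `δ` by powers of `t` produces `ε₀ ∉ V` with
`t • ε₀ ∈ V`. Since `t • ε₀` is killed by `t ^ (pⁿ - 1)` and `V` is free, `t • ε₀ = t • u` with
`u ∈ V`, and `ε = ε₀ - u` lies outside `V` and is killed by `t`, so `R ε = 𝔽_p ε`.
If `e₁, …, e_k` is a basis of `V`, then for each `c ∈ 𝔽_pᵏ` the elements `eᵢ + cᵢ ε` span a free
submodule of rank `k`, and different `c` give different submodules.
-/

/-- The cyclic group `ℤ/pⁿℤ`, written multiplicatively. -/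
abbrev Gpn (p n : ℕ) : Type := Multiplicative (ZMod (p ^ n))

/-- The group algebra `𝔽_p[ℤ/pⁿℤ]`. -/
abbrev Rpn (p n : ℕ) : Type := MonoidAlgebra (ZMod p) (Gpn p n)

/-- The fixed generator `σ` of `ℤ/pⁿℤ`, viewed inside the group algebra. -/
noncomputable def sigmaPn (p n : ℕ) : Rpn p n :=
  MonoidAlgebra.of (ZMod p) (Gpn p n) (Multiplicative.ofAdd (1 : ZMod (p ^ n)))

open Polynomial

section NilpotentGenerator

variable {K A : Type*} [Field K] [CommRing A] [Algebra K A] {t : A}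

theorem exists_eq_algebraMap_add_mul (hgen : Function.Surjective (aeval t : K[X] →ₐ[K] A))
    (a : A) : ∃ (l : K) (s : A), a = algebraMap K A l + t * s := by
  obtain ⟨f, rfl⟩ := hgen a
  refine ⟨f.coeff 0, aeval t f.divX, ?_⟩
  calc aeval t f = aeval t (X * f.divX + C (f.coeff 0)) := by rw [X_mul_divX_add]
    _ = _ := by rw [map_add, map_mul, aeval_X, aeval_C, add_comm]

theorem span_pow_eq_top (hgen : Function.Surjective (aeval t : K[X] →ₐ[K] A)) {N : ℕ}
    (ht : t ^ N = 0) : Submodule.span K (Set.range fun i : Fin N => t ^ (i : ℕ)) = ⊤ := by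
  refine Submodule.eq_top_iff'.mpr fun a => ?_
  obtain ⟨f, rfl⟩ := hgen a
  rw [aeval_eq_sum_range]
  refine Submodule.sum_mem _ fun i _ => ?_
  rcases lt_or_ge i N with hi | hi
  · exact Submodule.smul_mem _ _ (Submodule.subset_span ⟨⟨i, hi⟩, rfl⟩)
  · rw [← Nat.sub_add_cancel hi, pow_add, ht, mul_zero, smul_zero]
    exact Submodule.zero_mem _

theorem pow_ne_zero_of_lt_finrank (hgen : Function.Surjective (aeval t : K[X] →ₐ[K] A))
    {N : ℕ} (hN : N < Module.finrank K A) : t ^ N ≠ 0 := by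
  intro ht
  have := finrank_range_le_card (R := K) fun i : Fin N => t ^ (i : ℕ)
  rw [Set.finrank, span_pow_eq_top hgen ht, finrank_top, Fintype.card_fin] at this
  omega

theorem dvd_of_pow_mul_eq_zero (hgen : Function.Surjective (aeval t : K[X] →ₐ[K] A)) {m : ℕ}
    (ht : t ^ (m + 1) = 0) (hm : m < Module.finrank K A) {a : A} (ha : t ^ m * a = 0) :
    t ∣ a := by
  obtain ⟨l, s, rfl⟩ := exists_eq_algebraMap_add_mul hgen a
  have hl : l • t ^ m = 0 := by
    rwa [mul_add, ← mul_assoc, ← pow_succ, ht, zero_mul, add_zero, ← Algebra.commutes,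
      ← Algebra.smul_def] at ha
  rw [smul_eq_zero_iff_left (pow_ne_zero_of_lt_finrank hgen hm)] at hl
  simp [hl]

end NilpotentGenerator

section GroupAlgebra

variable (p n : ℕ) [Fact p.Prime]

theorem sigmaPn_pow (m : ℕ) :
    sigmaPn p n ^ m =
      MonoidAlgebra.of (ZMod p) (Gpn p n) (Multiplicative.ofAdd (m : ZMod (p ^ n))) := by
  rw [sigmaPn, ← map_pow, ← ofAdd_nsmul, nsmul_one]

theorem sigmaPn_sub_one_pow_card : (sigmaPn p n - 1) ^ p ^ n = 0 := by
  have : CharP (Rpn p n) p := charP_of_injective_algebraMap' (ZMod p) p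
  rw [sub_pow_char_pow, one_pow, sigmaPn_pow, ZMod.natCast_self, ofAdd_zero, map_one,
    sub_self]

theorem aeval_sigmaPn_sub_one_surjective :
    Function.Surjective (aeval (sigmaPn p n - 1) : (ZMod p)[X] →ₐ[ZMod p] Rpn p n) := by
  intro a
  change a ∈ (aeval (sigmaPn p n - 1)).range
  induction a using MonoidAlgebra.induction_on with
  | of g =>
    refine ⟨(X + 1) ^ (Multiplicative.toAdd g).val, ?_⟩
    change aeval _ _ = _
    rw [map_pow, map_add, aeval_X, map_one, sub_add_cancel, sigmaPn_pow, ZMod.natCast_zmod_val]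
    rfl
  | add x y hx hy => exact Subalgebra.add_mem _ hx hy
  | smul r x hx => exact Subalgebra.smul_mem _ hx r

theorem finrank_rpn : Module.finrank (ZMod p) (Rpn p n) = p ^ n := by
  rw [Module.finrank_eq_card_basis (MonoidAlgebra.basis (Gpn p n) (ZMod p)),
    Fintype.card_multiplicative, ZMod.card]

end GroupAlgebra

section FreeSubmodules

variable {R M : Type*} [CommRing R] [AddCommGroup M] [Module R M]

theorem exists_notMem_smul_mem_of_pow_smul_mem {V : Submodule R M} {t : R} {δ : M}
    (hδ : δ ∉ V) {j : ℕ} (hj : t ^ j • δ ∈ V) : ∃ ε ∉ V, t • ε ∈ V := by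
  induction j generalizing δ with
  | zero => exact absurd (by simpa using hj) hδ
  | succ j ih =>
    by_cases htδ : t • δ ∈ V
    · exact ⟨δ, hδ, htδ⟩
    · exact ih htδ (by rwa [smul_smul, ← pow_succ])

theorem Pi.exists_eq_smul_of_pow_smul_eq_zero {ι : Type*} {t : R} {m : ℕ}
    (hker : ∀ a : R, t ^ m * a = 0 → t ∣ a) {x : ι → R} (hx : t ^ m • x = 0) :
    ∃ y, x = t • y := by
  choose y hy using fun i => hker (x i) (congrFun hx i)
  exact ⟨y, funext hy⟩

theorem exists_notMem_smul_eq_zero {ι : Type*} {V : Submodule R M} (e : V ≃ₗ[R] (ι → R))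
    {t : R} {m : ℕ} (ht : t ^ (m + 1) = 0) (hker : ∀ a : R, t ^ m * a = 0 → t ∣ a) {δ : M}
    (hδ : δ ∉ V) : ∃ ε ∉ V, t • ε = 0 := by
  obtain ⟨ε₀, hε₀V, htε₀⟩ := exists_notMem_smul_mem_of_pow_smul_mem hδ (j := m + 1)
    (by rw [ht, zero_smul]; exact V.zero_mem)
  have hkill : t ^ m • (⟨t • ε₀, htε₀⟩ : V) = 0 := by
    ext
    rw [Submodule.coe_smul, smul_smul, ← pow_succ, ht, zero_smul, Submodule.coe_zero]
  obtain ⟨y, hy⟩ := Pi.exists_eq_smul_of_pow_smul_eq_zero hker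
    (by rw [← map_smul, hkill, map_zero] : t ^ m • e ⟨t • ε₀, htε₀⟩ = 0)
  refine ⟨ε₀ - e.symm y, fun h => hε₀V (by simpa using V.add_mem h (e.symm y).2), ?_⟩
  have hty : t • (e.symm y : M) = t • ε₀ := by
    rw [← Submodule.coe_smul, ← map_smul, ← hy, LinearEquiv.symm_apply_apply]
  rw [smul_sub, hty, sub_self]

variable {ι : Type*} [Fintype ι]

def shiftedEmbedding (E : (ι → R) →ₗ[R] M) (ε : M) (c : ι → R) :
    (ι → R) →ₗ[R] M :=
  E + Fintype.linearCombination R fun i => c i • ε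

theorem shiftedEmbedding_apply (E : (ι → R) →ₗ[R] M) (ε : M) (c : ι → R) (r : ι → R) :
    shiftedEmbedding E ε c r = E r + (∑ i, r i * c i) • ε := by
  simp [shiftedEmbedding, Fintype.linearCombination_apply, smul_smul, Finset.sum_smul]

theorem shiftedEmbedding_single [DecidableEq ι] (E : (ι → R) →ₗ[R] M) (ε : M) (c : ι → R)
    (i : ι) : shiftedEmbedding E ε c (Pi.single i 1) = E (Pi.single i 1) + c i • ε := by
  simp [shiftedEmbedding]

theorem mem_of_smul_mem_of_forall_mem_span {ε : M}
    (hε : ∀ r : R, r • ε ≠ 0 → ε ∈ R ∙ (r • ε)) {S : Submodule R M} {r : R} (hr : r • ε ∈ S)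
    (hr0 : r • ε ≠ 0) : ε ∈ S :=
  (Submodule.span_singleton_le_iff_mem _ _).mpr hr (hε r hr0)

theorem injective_shiftedEmbedding {E : (ι → R) →ₗ[R] M} {V : Submodule R M} {ε : M}
    (hE : Function.Injective E) (hEV : ∀ r, E r ∈ V) (hεV : ε ∉ V)
    (hε : ∀ r : R, r • ε ≠ 0 → ε ∈ R ∙ (r • ε)) (c : ι → R) :
    Function.Injective (shiftedEmbedding E ε c) := by
  refine (injective_iff_map_eq_zero _).mpr fun r hr => ?_
  rw [shiftedEmbedding_apply] at hr
  have hs : (∑ i, r i * c i) • ε = 0 := by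
    by_contra hs
    refine hεV (mem_of_smul_mem_of_forall_mem_span hε ?_ hs)
    rw [eq_neg_of_add_eq_zero_right hr]
    exact V.neg_mem (hEV r)
  exact hE (by rw [map_zero, ← hr, hs, add_zero])

theorem smul_eq_zero_of_range_shiftedEmbedding_eq [DecidableEq ι] {E : (ι → R) →ₗ[R] M}
    {V : Submodule R M} {ε : M} (hE : Function.Injective E) (hEV : ∀ r, E r ∈ V) (hεV : ε ∉ V)
    (hε : ∀ r : R, r • ε ≠ 0 → ε ∈ R ∙ (r • ε)) {c c' : ι → R}
    (h : LinearMap.range (shiftedEmbedding E ε c) = LinearMap.range (shiftedEmbedding E ε c'))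
    (i : ι) : (c i - c' i) • ε = 0 := by
  by_contra hne
  have hmem : (c i - c' i) • ε ∈ LinearMap.range (shiftedEmbedding E ε c) := by
    have hdiff : (c i - c' i) • ε = shiftedEmbedding E ε c (Pi.single i 1)
        - shiftedEmbedding E ε c' (Pi.single i 1) := by
      rw [shiftedEmbedding_single, shiftedEmbedding_single, sub_smul]
      abel
    rw [hdiff, h]
    exact sub_mem (h ▸ LinearMap.mem_range_self _ _) (LinearMap.mem_range_self _ _)
  obtain ⟨r, hr⟩ := mem_of_smul_mem_of_forall_mem_span hε hmem hne
  rw [shiftedEmbedding_apply] at hr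
  have hEr : E r = (1 - ∑ i, r i * c i) • ε := by
    rw [sub_smul, one_smul]
    exact eq_sub_of_add_eq hr
  have hs : (1 - ∑ i, r i * c i) • ε = 0 := by
    by_contra hs
    exact hεV (mem_of_smul_mem_of_forall_mem_span hε (hEr ▸ hEV r) hs)
  have hr0 : r = 0 := hE (by rw [hEr, hs, map_zero])
  have hε0 : ε = 0 := by simpa [hr0] using hs
  exact hεV (hε0 ▸ V.zero_mem)

theorem mem_span_smul_of_smul_eq_zero {K : Type*} [Field K] [Algebra K R] {t : R}
    (hdecomp : ∀ r : R, ∃ (l : K) (s : R), r = algebraMap K R l + t * s) {ε : M}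
    (htε : t • ε = 0) (r : R) (hr : r • ε ≠ 0) : ε ∈ R ∙ (r • ε) := by
  obtain ⟨l, s, rfl⟩ := hdecomp r
  rw [add_smul, mul_comm, mul_smul, htε, smul_zero, add_zero] at hr ⊢
  have hl : l ≠ 0 := by
    rintro rfl
    simp at hr
  rw [Submodule.span_singleton_smul_eq (hl.isUnit.map _)]
  exact Submodule.mem_span_singleton_self ε

theorem nonempty_embedding_free_submodules {K : Type*} [Field K] [Algebra K R] {t : R}
    (hdecomp : ∀ r : R, ∃ (l : K) (s : R), r = algebraMap K R l + t * s)
    {V : Submodule R M} (e : V ≃ₗ[R] (ι → R)) {ε : M} (hεV : ε ∉ V) (htε : t • ε = 0) :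
    Nonempty ((ι → K) ↪ {V' : Submodule R M // Nonempty (V' ≃ₗ[R] (ι → R))}) := by
  classical
  have hε := mem_span_smul_of_smul_eq_zero hdecomp htε
  set E : (ι → R) →ₗ[R] M := V.subtype ∘ₗ e.symm.toLinearMap
  have hE : Function.Injective E := V.injective_subtype.comp e.symm.injective
  have hEV : ∀ r, E r ∈ V := fun r => (e.symm r).2
  refine ⟨⟨fun c => ⟨LinearMap.range (shiftedEmbedding E ε (algebraMap K R ∘ c)),
    ⟨(LinearEquiv.ofInjective _ (injective_shiftedEmbedding hE hEV hεV hε _)).symm⟩⟩,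
    fun c c' h => funext fun i => ?_⟩⟩
  have hi :=
    smul_eq_zero_of_range_shiftedEmbedding_eq hE hEV hεV hε (congrArg Subtype.val h) i
  rw [Function.comp_apply, Function.comp_apply, ← map_sub] at hi
  by_contra hne
  have hε0 : ε = 0 := ((sub_ne_zero.mpr hne).isUnit.map (algebraMap K R)).smul_eq_zero.mp hi
  exact hεV (hε0 ▸ V.zero_mem)

end FreeSubmodules

theorem many_free_submodules_general (p n k : ℕ) (hp : p.Prime)
    (W : Type*) [AddCommGroup W] [Module (Rpn p n) W]
    (V : Submodule (Rpn p n) W) (hV : Nonempty (V ≃ₗ[Rpn p n] (Fin k → Rpn p n)))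
    (δ : W) (hδ₂ : δ ∉ V) :
    (p ^ k : Cardinal) ≤
      Cardinal.mk {V' : Submodule (Rpn p n) W //
        Nonempty (V' ≃ₗ[Rpn p n] (Fin k → Rpn p n))} := by
  have : Fact p.Prime := ⟨hp⟩
  obtain ⟨e⟩ := hV
  have hgen := aeval_sigmaPn_sub_one_surjective p n
  have ht : (sigmaPn p n - 1) ^ (p ^ n - 1 + 1) = 0 := by
    rw [Nat.sub_add_cancel (Nat.one_le_pow _ _ hp.pos), sigmaPn_sub_one_pow_card]
  have hker := fun a => dvd_of_pow_mul_eq_zero hgen ht (a := a)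
    (by rw [finrank_rpn]; exact Nat.sub_lt (Nat.one_le_pow _ _ hp.pos) one_pos)
  obtain ⟨ε, hεV, htε⟩ := exists_notMem_smul_eq_zero e ht hker hδ₂
  obtain ⟨emb⟩ :=
    nonempty_embedding_free_submodules (exists_eq_algebraMap_add_mul hgen) e hεV htε
  have := Cardinal.lift_mk_le'.mpr ⟨emb⟩
  rwa [Cardinal.mk_fintype, Fintype.card_fun, ZMod.card, Fintype.card_fin,
    Cardinal.lift_natCast, Nat.cast_pow, Cardinal.lift_uzero] at this

/-- Proposition 4.2: if an `R = 𝔽_p[G]`-module `W` contains a submodule `V ≅ R^k`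
and an element `δ ∉ V` with `(σ-1)^{pⁿ-1}·δ = 0`, then `W` contains at least `p^k`
submodules isomorphic to `R^k`. -/
theorem many_free_submodules (p n k : ℕ) (hp : p.Prime) (hn : 0 < n) (hk : 0 < k)
    (W : Type*) [AddCommGroup W] [Module (Rpn p n) W]
    (V : Submodule (Rpn p n) W) (hV : Nonempty (V ≃ₗ[Rpn p n] (Fin k → Rpn p n)))
    (δ : W) (hδ₁ : ((sigmaPn p n - 1) ^ (p ^ n - 1)) • δ = 0) (hδ₂ : δ ∉ V) :
    (p ^ k : Cardinal) ≤
      Cardinal.mk {V' : Submodule (Rpn p n) W //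
        Nonempty (V' ≃ₗ[Rpn p n] (Fin k → Rpn p n))} :=
  many_free_submodules_general p n k hp W V hV δ hδ₂
end

section
/- Let p be a prime, n a positive integer, and k a positive integer, and let Γ = (𝔽_p[G])^k ⋊ G. Then for every element x = ((f_1, ..., f_k), g) of Γ, one has x^{p^n} = (((g-1)^{p^n-1}·f_1, ..., (g-1)^{p^n-1}·f_k), 1); in particular, x^{p^n} lies in the subgroup ((σ-1)·𝔽_p[G])^k × {1}, i.e., each coordinate of the module part of x^{p^n} is divisible by σ - 1 in 𝔽_p[G]. (The p^n-th power computation in the proof of Theorem 1.1.) -/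
/-- The coordinatewise action of `G = ℤ/pⁿℤ` on `(𝔽_p[G])^k` by left multiplication. -/
noncomputable def kAct (p n k : ℕ) :
    Gpn p n →* MulAut (Multiplicative (Fin k → Rpn p n)) where
  toFun g := AddEquiv.toMultiplicative
    { toFun := fun f i => MonoidAlgebra.of (ZMod p) (Gpn p n) g * f i
      invFun := fun f i => MonoidAlgebra.of (ZMod p) (Gpn p n) g⁻¹ * f i
      left_inv := fun f => funext fun i => by
        simp [← mul_assoc, ← map_mul, ← MonoidAlgebra.one_def]
      right_inv := fun f => funext fun i => by
        simp [← mul_assoc, ← map_mul, ← MonoidAlgebra.one_def]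
      map_add' := fun f₁ f₂ => funext fun i => by simp [mul_add] }
  map_one' := by
    ext f
    simp [AddEquiv.toMultiplicative, ← MonoidAlgebra.one_def]
  map_mul' g₁ g₂ := by
    ext f : 1
    funext i
    show MonoidAlgebra.single (g₁ * g₂) 1 * (Multiplicative.toAdd f) i =
      MonoidAlgebra.single g₁ 1 * (MonoidAlgebra.single g₂ 1 * (Multiplicative.toAdd f) i)
    rw [← mul_assoc, MonoidAlgebra.single_mul_single, mul_one]

/-- The semidirect product `(𝔽_p[G])^k ⋊ G`. -/
noncomputable def SDP (p n k : ℕ) : Type :=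
  SemidirectProduct (Multiplicative (Fin k → Rpn p n)) (Gpn p n) (kAct p n k)

noncomputable instance (p n k : ℕ) : Group (SDP p n k) :=
  inferInstanceAs (Group (SemidirectProduct _ _ (kAct p n k)))

/-!
In a semidirect product `N ⋊ G` with `N` abelian, `(a, g)^m = (∏_{j<m} g^j • a, g^m)`. For
`m = pⁿ` we have `g^m = 1`, and in characteristic `p` the geometric sum `∑_{j<pⁿ} x^j` equals
`(x - 1)^(pⁿ-1)`, because `(x - 1)^(pⁿ) = x^(pⁿ) - 1`. Since `g` is a power of `σ`, `σ - 1`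
divides `g - 1`, hence also `(g - 1)^(pⁿ-1)` as `n > 0`.
-/

open Finset Polynomial

lemma SemidirectProduct.mk_pow {N G : Type*} [CommGroup N] [Group G] (φ : G →* MulAut N)
    (a : N) (g : G) (m : ℕ) :
    (⟨a, g⟩ : N ⋊[φ] G) ^ m = ⟨∏ j ∈ range m, φ (g ^ j) a, g ^ m⟩ := by
  induction m with
  | zero => ext <;> simp
  | succ m ih =>
    rw [pow_succ, ih]
    ext
    · simp only [SemidirectProduct.mul_left, prod_range_succ]
    · simp only [SemidirectProduct.mul_right, pow_succ]

lemma sub_one_pow_char_pow_sub_one {R : Type*} [CommRing R] (p : ℕ) [Fact p.Prime] [CharP R p]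
    (x : R) (m : ℕ) : (x - 1) ^ (p ^ m - 1) = ∑ j ∈ range (p ^ m), x ^ j := by
  suffices hX : ((X : R[X]) - 1) ^ (p ^ m - 1) = ∑ j ∈ range (p ^ m), X ^ j by
    simpa using congrArg (eval x) hX
  have hpos : 0 < p ^ m := pow_pos (Fact.out : p.Prime).pos m
  refine (monic_X_sub_C (1 : R)).isRegular.right ?_
  simp only [map_one]
  rw [← pow_succ, Nat.sub_add_cancel hpos, sub_pow_char_pow, one_pow, geom_sum_mul]

lemma MonoidAlgebra.of_sub_one_dvd_of_mem_powers {k G : Type*} [Ring k] [Monoid G] {σ g : G}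
    (hg : g ∈ Submonoid.powers σ) : MonoidAlgebra.of k G σ - 1 ∣ MonoidAlgebra.of k G g - 1 := by
  obtain ⟨m, rfl⟩ := hg
  simpa using sub_one_dvd_pow_sub_one (MonoidAlgebra.of k G σ) m

lemma ZMod.mem_powers_ofAdd_one {m : ℕ} [NeZero m] (g : Multiplicative (ZMod m)) :
    g ∈ Submonoid.powers (Multiplicative.ofAdd 1) :=
  ⟨g.toAdd.val, Multiplicative.toAdd.injective (by simp)⟩

lemma ZMod.multiplicative_pow_self {m : ℕ} (g : Multiplicative (ZMod m)) : g ^ m = 1 :=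
  Multiplicative.toAdd.injective (by simp)

lemma kAct_apply (p n k : ℕ) (g : Gpn p n) (a : Multiplicative (Fin k → Rpn p n)) :
    kAct p n k g a =
      Multiplicative.ofAdd fun i => MonoidAlgebra.of (ZMod p) (Gpn p n) g * a.toAdd i :=
  rfl

lemma SDP.mk_pow (p n k : ℕ) (f : Fin k → Rpn p n) (g : Gpn p n) (m : ℕ) :
    (⟨Multiplicative.ofAdd f, g⟩ : SDP p n k) ^ m =
      ⟨Multiplicative.ofAdd fun i =>
        (∑ j ∈ range m, MonoidAlgebra.of (ZMod p) (Gpn p n) g ^ j) * f i, g ^ m⟩ := by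
  refine (SemidirectProduct.mk_pow (kAct p n k) _ g m).trans ?_
  simp only [kAct_apply]
  simp only [map_pow, toAdd_ofAdd, ← ofAdd_sum, sum_fn, sum_mul]

theorem sdp_pow_pn_general (p n k : ℕ) (hp : p.Prime) (hn : 0 < n)
    (f : Fin k → Rpn p n) (g : Gpn p n) :
    ((⟨Multiplicative.ofAdd f, g⟩ : SDP p n k) ^ (p ^ n) =
      ⟨Multiplicative.ofAdd
        (fun i => (MonoidAlgebra.of (ZMod p) (Gpn p n) g - 1) ^ (p ^ n - 1) * f i), 1⟩) ∧
    ∀ i, (sigmaPn p n - 1) ∣ (MonoidAlgebra.of (ZMod p) (Gpn p n) g - 1) ^ (p ^ n - 1) * f i := by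
  have : Fact p.Prime := ⟨hp⟩
  have : NeZero (p ^ n) := ⟨(pow_pos hp.pos n).ne'⟩
  have : CharP (Rpn p n) p := charP_of_injective_algebraMap' (ZMod p) p
  refine ⟨?_, fun i => dvd_mul_of_dvd_left (dvd_pow ?_ ?_) (f i)⟩
  · rw [SDP.mk_pow, ZMod.multiplicative_pow_self, sub_one_pow_char_pow_sub_one]
  · exact MonoidAlgebra.of_sub_one_dvd_of_mem_powers (ZMod.mem_powers_ofAdd_one g)
  · have := Nat.one_lt_pow hn.ne' hp.one_lt
    omega

/-- The `pⁿ`-th power computation in the proof of Theorem 1.1: in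
`Γ = (𝔽_p[G])^k ⋊ G`, the `pⁿ`-th power of `((f₁,…,f_k), g)` is
`(((g-1)^{pⁿ-1}f₁, …, (g-1)^{pⁿ-1}f_k), 1)`, and each coordinate of the module part
is divisible by `σ - 1`. -/
theorem sdp_pow_pn (p n k : ℕ) (hp : p.Prime) (hn : 0 < n) (hk : 0 < k)
    (f : Fin k → Rpn p n) (g : Gpn p n) :
    ((⟨Multiplicative.ofAdd f, g⟩ : SDP p n k) ^ (p ^ n) =
      ⟨Multiplicative.ofAdd
        (fun i => (MonoidAlgebra.of (ZMod p) (Gpn p n) g - 1) ^ (p ^ n - 1) * f i), 1⟩) ∧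
    ∀ i, (sigmaPn p n - 1) ∣ (MonoidAlgebra.of (ZMod p) (Gpn p n) g - 1) ^ (p ^ n - 1) * f i :=
  sdp_pow_pn_general p n k hp hn f g
end

section
/- Let p be a prime, n a positive integer, and k a positive integer, and let Γ = (𝔽_p[G])^k ⋊ G. Let H be an 𝔽_p[G]-submodule of (𝔽_p[G])^k of index p. Then H × {1} is a normal subgroup of Γ, the p^n-th power of every element of Γ lies in H × {1}, and consequently the quotient group Γ/(H × {1}) has exponent dividing p^n; in particular Γ/(H × {1}) is not isomorphic to the cyclic group ℤ/p^{n+1}ℤ. (The contradiction derived in the proof of Theorem 1.1.) -/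
/-- The image of an `𝔽_p[G]`-submodule `H ⊆ (𝔽_p[G])^k` as the subgroup `H × {1}`
of the semidirect product `(𝔽_p[G])^k ⋊ G`. -/
noncomputable def HGamma (p n k : ℕ) (H : Submodule (Rpn p n) (Fin k → Rpn p n)) :
    Subgroup (SDP p n k) :=
  Subgroup.map
    (SemidirectProduct.inl : Multiplicative (Fin k → Rpn p n) →* SDP p n k)
    (AddSubgroup.toSubgroup H.toAddSubgroup)

/-!
Since `H` has index `p`, the quotient `Q = (𝔽_p[G])^k ⧸ H` is a simple `𝔽_p[G]`-module. In
characteristic `p` we have `(g - 1)^{pⁿ} = g^{pⁿ} - 1 = 0`, so `g - 1` lies in the Jacobson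
radical of `𝔽_p[G]` and annihilates `Q`: the group `G` acts trivially on `Q`. Hence
`(v, g) ↦ (v + H, g)` is a homomorphism `Γ → Q × G` with kernel `H × {1}`, and `Q × G` has
exponent dividing `pⁿ` (as `n ≥ 1`), whereas `ℤ/p^{n+1}ℤ` has an element of order `p^{n+1}`.
-/

theorem isNilpotent_sub_one_of_pow_eq_one {A : Type*} [CommRing A] {p : ℕ} [ExpChar A p]
    {n : ℕ} {x : A} (hx : x ^ p ^ n = 1) : IsNilpotent (x - 1) :=
  ⟨p ^ n, by rw [sub_pow_expChar_pow, hx, one_pow, sub_self]⟩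

theorem IsNilpotent.smul_eq_zero_of_isSimpleModule {R M : Type*} [CommRing R] [AddCommGroup M]
    [Module R M] [IsSimpleModule R M] {r : R} (hr : IsNilpotent r) (m : M) : r • m = 0 :=
  Module.mem_annihilator.mp (IsSemisimpleModule.jacobson_le_annihilator R M
    (nilradical_le_jacobson R (mem_nilradical.mpr hr))) m

theorem isSimpleModule_of_prime_card {R M : Type*} [Ring R] [AddCommGroup M] [Module R M]
    (hM : (Nat.card M).Prime) : IsSimpleModule R M := by
  have : IsSimpleAddGroup M := AddCommGroup.is_simple_iff_prime_card.2 hM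
  refine { eq_bot_or_eq_top := fun N => ?_ }
  refine (IsSimpleAddGroup.eq_bot_or_eq_top_of_normal N.toAddSubgroup inferInstance).imp
    (fun h => ?_) Submodule.toAddSubgroup_eq_top.mp
  exact Submodule.toAddSubgroup_injective (h.trans Submodule.bot_toAddSubgroup.symm)

theorem Gpn.pow_eq_one {p n : ℕ} (g : Gpn p n) : g ^ p ^ n = 1 := by
  have := pow_card_eq_one' (x := g)
  rwa [Nat.card_congr Multiplicative.toAdd, Nat.card_zmod] at this

theorem Rpn.of_smul_eq_self {p n : ℕ} (hp : p.Prime) {Q : Type*} [AddCommGroup Q]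
    [Module (Rpn p n) Q] (hQ : Nat.card Q = p) (g : Gpn p n) (q : Q) :
    MonoidAlgebra.of (ZMod p) (Gpn p n) g • q = q := by
  have : Fact p.Prime := ⟨hp⟩
  have : CharP (Rpn p n) p := charP_of_injective_algebraMap' (ZMod p) p
  have : IsSimpleModule (Rpn p n) Q := isSimpleModule_of_prime_card (hQ ▸ hp)
  have hnil : IsNilpotent (MonoidAlgebra.of (ZMod p) (Gpn p n) g - 1) :=
    isNilpotent_sub_one_of_pow_eq_one (by rw [← map_pow, Gpn.pow_eq_one, map_one])
  rw [← sub_eq_zero, ← hnil.smul_eq_zero_of_isSimpleModule q, sub_smul, one_smul]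

section QuotientProd

variable {p n k : ℕ}

theorem toAdd_kAct (g : Gpn p n) (f : Multiplicative (Fin k → Rpn p n)) :
    (kAct p n k g f).toAdd = MonoidAlgebra.of (ZMod p) (Gpn p n) g • f.toAdd :=
  rfl

theorem mem_HGamma_iff {H : Submodule (Rpn p n) (Fin k → Rpn p n)}
    {x : Multiplicative (Fin k → Rpn p n) ⋊[kAct p n k] Gpn p n} :
    x ∈ HGamma p n k H ↔ x.left.toAdd ∈ H ∧ x.right = 1 := by
  constructor
  · rintro ⟨b, hb, rfl⟩
    exact ⟨hb, rfl⟩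
  · rintro ⟨hx, hx1⟩
    exact ⟨x.left, hx, SemidirectProduct.ext rfl hx1.symm⟩

variable (H : Submodule (Rpn p n) (Fin k → Rpn p n))
  (hH : ∀ (g : Gpn p n) (q : (Fin k → Rpn p n) ⧸ H),
    MonoidAlgebra.of (ZMod p) (Gpn p n) g • q = q)

noncomputable def SDP.quotientProdHom :
    SDP p n k →* Multiplicative ((Fin k → Rpn p n) ⧸ H) × Gpn p n :=
  SemidirectProduct.lift
    ((MonoidHom.inl _ _).comp (AddMonoidHom.toMultiplicative H.mkQ.toAddMonoidHom))
    (MonoidHom.inr _ _)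
    (fun g => MonoidHom.ext fun f => by simp [toAdd_kAct, -MonoidAlgebra.of_apply, hH])

theorem SDP.quotientProdHom_apply
    (x : Multiplicative (Fin k → Rpn p n) ⋊[kAct p n k] Gpn p n) :
    SDP.quotientProdHom H hH x = (.ofAdd (H.mkQ x.left.toAdd), x.right) :=
  Prod.ext (mul_one _) (one_mul _)

theorem SDP.ker_quotientProdHom : (SDP.quotientProdHom H hH).ker = HGamma p n k H := by
  ext x
  rw [MonoidHom.mem_ker,
    show SDP.quotientProdHom H hH x = _ from SDP.quotientProdHom_apply H hH x, Prod.mk_eq_one,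
    ofAdd_eq_one, Submodule.mkQ_apply, Submodule.Quotient.mk_eq_zero]
  exact mem_HGamma_iff.symm

end QuotientProd

theorem prod_gpn_pow_eq_one {p n : ℕ} {Q : Type*} [AddCommGroup Q] (hQ : Nat.card Q ∣ p ^ n)
    (y : Multiplicative Q × Gpn p n) : y ^ p ^ n = 1 :=
  Prod.ext (orderOf_dvd_iff_pow_eq_one.mp ((orderOf_dvd_natCard _).trans
    (by rwa [Nat.card_congr Multiplicative.toAdd]))) (Gpn.pow_eq_one y.2)

theorem dvd_of_forall_pow_eq_one_of_mulEquiv {G : Type*} [Group G] {m N : ℕ}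
    (h : ∀ y : G, y ^ m = 1) (e : G ≃* Multiplicative (ZMod N)) : N ∣ m := by
  have := congrArg e (h (e.symm (.ofAdd 1)))
  rw [map_pow, e.apply_symm_apply, ← ofAdd_nsmul, map_one e, ofAdd_eq_one, nsmul_one] at this
  exact (ZMod.natCast_eq_zero_iff m N).mp this

theorem quotient_by_index_p_not_cyclic_general (p n k : ℕ) (hp : p.Prime) (hn : 0 < n)
    (H : Submodule (Rpn p n) (Fin k → Rpn p n))
    (hH : Nat.card ((Fin k → Rpn p n) ⧸ H) = p) :
    ∃ hN : (HGamma p n k H).Normal,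
      (∀ x : SDP p n k, x ^ (p ^ n) ∈ HGamma p n k H) ∧
      (letI := hN;
        (∀ y : SDP p n k ⧸ HGamma p n k H, y ^ (p ^ n) = 1) ∧
        IsEmpty ((SDP p n k ⧸ HGamma p n k H) ≃* Multiplicative (ZMod (p ^ (n + 1))))) := by
  have hker := SDP.ker_quotientProdHom H (Rpn.of_smul_eq_self hp hH)
  have hN : (HGamma p n k H).Normal := hker ▸ MonoidHom.normal_ker _
  have hQ : Nat.card ((Fin k → Rpn p n) ⧸ H) ∣ p ^ n := hH.symm ▸ dvd_pow_self p hn.ne'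
  have hpow (x : SDP p n k) : x ^ (p ^ n) ∈ HGamma p n k H := by
    rw [← hker, MonoidHom.mem_ker, map_pow, prod_gpn_pow_eq_one hQ]
  have hexp (y : SDP p n k ⧸ HGamma p n k H) : y ^ (p ^ n) = 1 := by
    induction y using QuotientGroup.induction_on with
    | H x => exact (QuotientGroup.eq_one_iff _).mpr (hpow x)
  refine ⟨hN, hpow, hexp, ⟨fun e => ?_⟩⟩
  have := (Nat.pow_dvd_pow_iff_le_right hp.one_lt).mp (dvd_of_forall_pow_eq_one_of_mulEquiv hexp e)
  omega

/-- The contradiction derived in the proof of Theorem 1.1: if `H` is an index-`p`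
`𝔽_p[G]`-submodule of `(𝔽_p[G])^k`, then `H × {1}` is normal in `Γ = (𝔽_p[G])^k ⋊ G`,
every `pⁿ`-th power lies in `H × {1}`, the quotient has exponent dividing `pⁿ`, and in
particular the quotient is not cyclic of order `p^{n+1}`. -/
theorem quotient_by_index_p_not_cyclic (p n k : ℕ) (hp : p.Prime) (hn : 0 < n) (hk : 0 < k)
    (H : Submodule (Rpn p n) (Fin k → Rpn p n))
    (hH : Nat.card ((Fin k → Rpn p n) ⧸ H) = p) :
    ∃ hN : (HGamma p n k H).Normal,
      (∀ x : SDP p n k, x ^ (p ^ n) ∈ HGamma p n k H) ∧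
      (letI := hN;
        (∀ y : SDP p n k ⧸ HGamma p n k H, y ^ (p ^ n) = 1) ∧
        IsEmpty ((SDP p n k ⧸ HGamma p n k H) ≃* Multiplicative (ZMod (p ^ (n + 1))))) :=
  quotient_by_index_p_not_cyclic_general p n k hp hn H hH
end

section
/- Let p be a prime and n a positive integer with n ≥ 2 when p = 2, and let k be a positive integer. Let Γ be a finite group with an abelian normal subgroup A of exponent dividing p such that Γ/A ≅ G = ℤ/p^nℤ. Regard A as an 𝔽_p[G]-module via conjugation: for g ∈ G and a ∈ A, g·a = x a x^{-1} where x ∈ Γ is any element mapping to g in Γ/A (this is well-defined since A is abelian). If A is isomorphic to (𝔽_p[G])^k as an 𝔽_p[G]-module, then Γ ≅ (𝔽_p[G])^k ⋊ G. (Group-theoretic content of Lemma 4.1: the only extension of G by a free 𝔽_p[G]-module of rank k inducing the natural module structure is the semidirect product.) -/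
/-!
Lift a generator `σ` of the cyclic group `G` of order `m` to `x ∈ Γ`. Then `b = xᵐ` lies in `A`
and is fixed by `σ`, and for `a ∈ A` one has `(a x)ᵐ = N(a) · b` with `N = ∑ g, g` the norm
element. In a free `R[G]`-module every `σ`-fixed element is a norm, because a `σ`-fixed element
of `R[G]` has constant coefficients; choosing `N(a) = b⁻¹` makes `(a x)ᵐ = 1`, so `σ ↦ a x` extends
to a splitting `G →* Γ`. A split extension whose conjugation action is the module action is the
semidirect product.
-/

open Subgroup

namespace GroupExtension

variable {N E G : Type*} [Group N] [Group E] [Group G]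

def ofNormalSubgroup (A : Subgroup E) [A.Normal] (e : A ≃* N) (ψ : E ⧸ A ≃* G) :
    GroupExtension N E G where
  inl := A.subtype.comp (e.symm : N →* A)
  rightHom := (ψ : E ⧸ A →* G).comp (QuotientGroup.mk' A)
  inl_injective := A.subtype_injective.comp e.symm.injective
  range_inl_eq_ker_rightHom := by
    rw [MonoidHom.ker_mulEquiv_comp, QuotientGroup.ker_mk', MonoidHom.range_comp,
      MonoidHom.range_eq_top_of_surjective _ e.symm.surjective, ← MonoidHom.range_eq_map,
      range_subtype]
  rightHom_surjective := ψ.surjective.comp (QuotientGroup.mk'_surjective A)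

variable {S : GroupExtension N E G}

theorem Splitting.conjAct_eq (s : S.Splitting) {φ : G →* MulAut N}
    (hφ : ∀ x n, S.inl (φ (S.rightHom x) n) = x * S.inl n * x⁻¹) : s.conjAct = φ := by
  ext g n
  apply S.inl_injective
  rw [Splitting.conjAct, MonoidHom.comp_apply, inl_conjAct_comm, ← hφ]
  exact congrArg (fun g => S.inl (φ g n)) (s.rightHom_splitting g)

theorem Splitting.nonempty_mulEquiv_semidirectProduct (s : S.Splitting) {φ : G →* MulAut N}
    (hφ : ∀ x n, S.inl (φ (S.rightHom x) n) = x * S.inl n * x⁻¹) : Nonempty (E ≃* N ⋊[φ] G) :=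
  ⟨s.conjAct_eq hφ ▸ s.semidirectProductMulEquiv.symm⟩

noncomputable def Splitting.ofGenerator {σ : G} (hσ : ∀ g, g ∈ zpowers σ) {y : E}
    (hy : S.rightHom y = σ) (hy1 : y ^ orderOf σ = 1) : S.Splitting where
  toMonoidHom := monoidHomOfForallMemZpowers hσ (orderOf_dvd_of_pow_eq_one hy1)
  rightInverse_rightHom g := by
    obtain ⟨k, rfl⟩ := mem_zpowers_iff.mp (hσ g)
    simp [hy]

end GroupExtension

theorem IsCyclic.sum_univ_eq_sum_range_orderOf {G M : Type*} [Group G] [Fintype G]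
    [AddCommMonoid M] {σ : G} (hσ : ∀ g, g ∈ zpowers σ) (f : G → M) :
    ∑ g, f g = ∑ i ∈ Finset.range (orderOf σ), f (σ ^ i) := by
  classical
  rw [← IsCyclic.image_range_orderOf hσ, Finset.sum_image]
  simpa using pow_injOn_Iio_orderOf

namespace MonoidAlgebra

variable {R G : Type*} [Semiring R] [Group G] [Fintype G] {σ : G}

theorem coeff_eq_coeff_one_of_of_mul_eq (hσ : ∀ g, g ∈ zpowers σ) {c : MonoidAlgebra R G}
    (hc : of R G σ * c = c) (g : G) : c.coeff g = c.coeff 1 := by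
  have hpow : ∀ k : ℕ, of R G (σ ^ k) * c = c := by
    intro k
    induction k with
    | zero => rw [pow_zero, map_one, one_mul]
    | succ k ih => rw [pow_succ', map_mul, mul_assoc, ih, hc]
  obtain ⟨k, rfl⟩ := mem_powers_iff_mem_zpowers.mpr (hσ g)
  simpa using (congrArg (fun c => c.coeff (σ ^ k)) (hpow k)).symm

theorem eq_norm_mul_single_of_of_mul_eq (hσ : ∀ g, g ∈ zpowers σ) {c : MonoidAlgebra R G}
    (hc : of R G σ * c = c) : c = (∑ g, of R G g) * single 1 (c.coeff 1) := by
  ext g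
  simp [Finset.sum_mul, coeff_sum, coeff_eq_coeff_one_of_of_mul_eq hσ hc g]

theorem exists_norm_smul_eq_of_of_smul_eq {ι : Type*} (hσ : ∀ g, g ∈ zpowers σ)
    {b : ι → MonoidAlgebra R G} (hb : of R G σ • b = b) : ∃ w, (∑ g, of R G g) • w = b :=
  ⟨fun i => single 1 ((b i).coeff 1),
    funext fun i => (eq_norm_mul_single_of_of_mul_eq hσ (congrFun hb i)).symm⟩

end MonoidAlgebra

namespace GroupExtension

open MonoidAlgebra Multiplicative

variable {R G M E : Type*} [Semiring R] [Group G] [AddCommGroup M]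
  [Module (MonoidAlgebra R G) M] [Group E] {S : GroupExtension (Multiplicative M) E G}

theorem inl_mul_pow
    (hS : ∀ x v, S.inl (ofAdd (of R G (S.rightHom x) • v)) = x * S.inl (ofAdd v) * x⁻¹)
    (v : M) (x : E) (j : ℕ) :
    (S.inl (ofAdd v) * x) ^ j =
      S.inl (ofAdd ((∑ i ∈ Finset.range j, of R G (S.rightHom x ^ i)) • v)) * x ^ j := by
  induction j with
  | zero => simp
  | succ j ih =>
    calc (S.inl (ofAdd v) * x) ^ (j + 1)
        = S.inl (ofAdd ((∑ i ∈ Finset.range j, of R G (S.rightHom x ^ i)) • v)) *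
            (x ^ j * S.inl (ofAdd v) * (x ^ j)⁻¹) * x ^ (j + 1) := by
          rw [pow_succ, ih]; group
      _ = _ := by
          rw [← hS, map_pow, ← map_mul, ← ofAdd_add, Finset.sum_range_succ, add_smul]

theorem exists_lift_pow_orderOf_eq_one [Fintype G]
    (hS : ∀ x v, S.inl (ofAdd (of R G (S.rightHom x) • v)) = x * S.inl (ofAdd v) * x⁻¹)
    {σ : G} (hσ : ∀ g, g ∈ zpowers σ)
    (hnorm : ∀ b : M, of R G σ • b = b → ∃ w, (∑ g, of R G g) • w = b) :
    ∃ y, S.rightHom y = σ ∧ y ^ orderOf σ = 1 := by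
  obtain ⟨x, hx⟩ := S.rightHom_surjective σ
  obtain ⟨b, hb⟩ : x ^ orderOf σ ∈ S.inl.range := by
    rw [S.range_inl_eq_ker_rightHom, MonoidHom.mem_ker, map_pow, hx, pow_orderOf_eq_one]
  have hfix : of R G σ • b.toAdd = b.toAdd := by
    refine ofAdd.injective (S.inl_injective ?_)
    rw [← hx, hS, ofAdd_toAdd, hb]
    group
  obtain ⟨w, hw⟩ := hnorm _ hfix
  refine ⟨S.inl (ofAdd (-w)) * x, by simp [hx], ?_⟩
  rw [inl_mul_pow hS, hx, ← IsCyclic.sum_univ_eq_sum_range_orderOf hσ, smul_neg, hw, ← hb,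
    ← map_mul, ofAdd_neg, ofAdd_toAdd, inv_mul_cancel, map_one]

end GroupExtension

theorem extension_by_free_module_is_semidirect_general (p n k : ℕ)
    (hp : p.Prime)
    (Γ : Type*) [Group Γ] (A : Subgroup Γ) [hA : A.Normal]
    (ψ : (Γ ⧸ A) ≃* Gpn p n)
    (e : A ≃ (Fin k → Rpn p n))
    (he_mul : ∀ a b : A, e (a * b) = e a + e b)
    (he_conj : ∀ (x : Γ) (a : A),
      e ⟨x * (a : Γ) * x⁻¹, hA.conj_mem (a : Γ) a.2 x⟩ =
        fun i => MonoidAlgebra.of (ZMod p) (Gpn p n) (ψ (QuotientGroup.mk x)) * e a i) :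
    Nonempty (Γ ≃* SDP p n k) := by
  have : NeZero (p ^ n) := ⟨pow_ne_zero n hp.ne_zero⟩
  let S := GroupExtension.ofNormalSubgroup A (MulEquiv.mk' (e.trans Multiplicative.ofAdd) he_mul) ψ
  have hS : ∀ x v, S.inl (.ofAdd (MonoidAlgebra.of (ZMod p) _ (S.rightHom x) • v)) =
      x * S.inl (.ofAdd v) * x⁻¹ := by
    intro x v
    have h := he_conj x (e.symm v)
    rw [e.apply_symm_apply] at h
    exact congrArg Subtype.val (e.symm_apply_eq.mpr h.symm)
  obtain ⟨σ, hσ⟩ := IsCyclic.exists_generator (α := Gpn p n)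
  obtain ⟨y, hy, hy1⟩ := GroupExtension.exists_lift_pow_orderOf_eq_one hS hσ
    fun _ => MonoidAlgebra.exists_norm_smul_eq_of_of_smul_eq hσ
  -- `kAct p n k g m` unfolds to `ofAdd (of g • m.toAdd)`
  exact (GroupExtension.Splitting.ofGenerator hσ hy hy1).nonempty_mulEquiv_semidirectProduct
    (φ := kAct p n k) fun x m => hS x m.toAdd

/-- Group-theoretic content of Lemma 4.1: if a finite group `Γ` has an abelian normal
subgroup `A` with `Γ/A ≅ G = ℤ/pⁿℤ` (via `ψ`), and `A`, regarded as an `𝔽_p[G]`-module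
via conjugation, is isomorphic to `(𝔽_p[G])^k` (via the additive bijection `e`, which
intertwines conjugation with the `G`-action), then `Γ ≅ (𝔽_p[G])^k ⋊ G`. -/
theorem extension_by_free_module_is_semidirect (p n k : ℕ)
    (hp : p.Prime) (hn : 0 < n) (hn2 : p = 2 → 2 ≤ n) (hk : 0 < k)
    (Γ : Type*) [Group Γ] [Finite Γ] (A : Subgroup Γ) [hA : A.Normal]
    (ψ : (Γ ⧸ A) ≃* Gpn p n)
    (e : A ≃ (Fin k → Rpn p n))
    (he_mul : ∀ a b : A, e (a * b) = e a + e b)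
    (he_conj : ∀ (x : Γ) (a : A),
      e ⟨x * (a : Γ) * x⁻¹, hA.conj_mem (a : Γ) a.2 x⟩ =
        fun i => MonoidAlgebra.of (ZMod p) (Gpn p n) (ψ (QuotientGroup.mk x)) * e a i) :
    Nonempty (Γ ≃* SDP p n k) :=
  extension_by_free_module_is_semidirect_general p n k hp Γ A (hA := hA) ψ e he_mul he_conj
end
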